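/- Let h : ℂ → ℂ be continuous on the closed lower half-plane {τ ∈ ℂ : Im τ ≤ 0}, holomorphic on the open lower half-plane {Im τ < 0}, and satisfy |h(τ)| ≤ C(1+|τ|)^{-2} for all τ with Im τ ≤ 0 and some constant C ≥ 0. Then for every real t < 0 one has ∫_ℝ h(σ) e^{i t σ} dσ = 0. -/

import Mathlib

/-!
Multiplying by `e^{itτ}`, whose modulus on the lower half-plane is `e^{-t Im τ} ≤ 1` for `t ≤ 0`,
keeps the integrand holomorphic and dominated by an integrable function of `Re τ`. Cauchy's
theorem on long rectangles (whose vertical sides vanish in the limit) moves the line of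
integration from `ℝ` down to `ℝ - iy`, where the integrand is `O(e^{ty})` in `L¹`. Letting
`y → ∞` with `t < 0` shows the integral vanishes.
-/

open MeasureTheory Filter Topology Set Complex

theorem integrable_one_add_norm_zpow {n : ℤ} (hn : n < -1) :
    Integrable fun x : ℝ => (1 + ‖x‖) ^ n := by
  have := integrable_one_add_norm (E := ℝ) (μ := volume) (r := -n)
    (by rw [Module.finrank_self]; exact_mod_cast (by omega : 1 < -n))
  simpa [← Real.rpow_intCast] using this

theorem tendsto_one_add_norm_zpow_cocompact {n : ℤ} (hn : n < 0) :
    Tendsto (fun x : ℝ => (1 + ‖x‖) ^ n) (cocompact ℝ) (𝓝 0) :=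
  (tendsto_zpow_atTop_zero hn).comp
    (tendsto_atTop_add_const_left _ 1 tendsto_norm_cocompact_atTop)

theorem one_add_zpow_neg_le_of_le {a b : ℝ} {n : ℕ} (ha : 0 ≤ a) (hab : a ≤ b) :
    (1 + b) ^ (-n : ℤ) ≤ (1 + a) ^ (-n : ℤ) := by
  simp only [zpow_neg, zpow_natCast]
  gcongr

namespace Complex

variable {E : Type*} [NormedAddCommGroup E]

theorem integrable_comp_add_mul_I {f : ℂ → E} {g : ℝ → ℝ} {s : Set ℝ} {c : ℝ}
    (hcont : ContinuousOn f (im ⁻¹' s)) (hfg : ∀ z : ℂ, z.im ∈ s → ‖f z‖ ≤ g z.re)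
    (hg : Integrable g) (hc : c ∈ s) : Integrable fun x : ℝ => f (x + c * I) := by
  refine hg.mono' ?_ (.of_forall fun x => by simpa using hfg (x + c * I) (by simpa using hc))
  exact (hcont.comp_continuous (by fun_prop) fun x => by simpa using hc).aestronglyMeasurable

variable [NormedSpace ℂ E]

theorem tendsto_intervalIntegral_vertical_zero {f : ℂ → E} {g : ℝ → ℝ} {a b : ℝ}
    {l : Filter ℝ} (hfg : ∀ z : ℂ, z.im ∈ Icc a b → ‖f z‖ ≤ g z.re) (hg : Tendsto g l (𝓝 0))
    (hab : a ≤ b) : Tendsto (fun x : ℝ => ∫ y in a..b, f (x + y * I)) l (𝓝 0) := by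
  rw [tendsto_zero_iff_norm_tendsto_zero]
  have hbound : Tendsto (fun x => g x * |b - a|) l (𝓝 0) := by
    simpa using hg.mul_const |b - a|
  refine squeeze_zero (fun _ => norm_nonneg _) (fun x => ?_) hbound
  refine intervalIntegral.norm_integral_le_of_norm_le_const fun y hy => ?_
  rw [uIoc_of_le hab] at hy
  simpa using hfg (x + y * I) (by simpa using Ioc_subset_Icc_self hy)

theorem integral_comp_add_mul_I_eq {f : ℂ → E} {g : ℝ → ℝ} {a b : ℝ} (hab : a ≤ b)
    (hcont : ContinuousOn f (im ⁻¹' Icc a b)) (hdiff : DifferentiableOn ℂ f (im ⁻¹' Ioo a b))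
    (hfg : ∀ z : ℂ, z.im ∈ Icc a b → ‖f z‖ ≤ g z.re)
    (hg : Integrable g) (hg0 : Tendsto g (cocompact ℝ) (𝓝 0)) :
    ∫ x : ℝ, f (x + a * I) = ∫ x : ℝ, f (x + b * I) := by
  have hline (c : ℝ) (hc : c ∈ Icc a b) :
      Tendsto (fun T : ℝ => ∫ x in -T..T, f (x + c * I)) atTop (𝓝 (∫ x : ℝ, f (x + c * I))) :=
    intervalIntegral_tendsto_integral (integrable_comp_add_mul_I hcont hfg hg hc)
      tendsto_neg_atTop_atBot tendsto_id
  have hright := tendsto_intervalIntegral_vertical_zero hfg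
    (hg0.mono_left atTop_le_cocompact) hab
  have hleft := (tendsto_intervalIntegral_vertical_zero hfg
    (hg0.mono_left atBot_le_cocompact) hab).comp tendsto_neg_atTop_atBot
  have hrect : ∀ T : ℝ, (∫ x in -T..T, f (x + a * I)) - (∫ x in -T..T, f (x + b * I)) +
      I • (∫ y in a..b, f (T + y * I)) - I • (∫ y in a..b, f (↑(-T) + y * I)) = 0 := by
    intro T
    have := integral_boundary_rect_eq_zero_of_continuousOn_of_differentiableOn f
      (↑(-T) + a * I) (T + b * I) ?_ ?_
    · simpa using this
    · exact hcont.mono fun z hz => by simpa [uIcc_of_le hab] using hz.2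
    · exact hdiff.mono fun z hz => by simpa [hab] using hz.2
  have hlim := (((hline a ⟨le_rfl, hab⟩).sub (hline b ⟨hab, le_rfl⟩)).add
    (hright.const_smul I)).sub (hleft.const_smul I)
  simp only [smul_zero, add_zero, sub_zero, Function.comp_def, hrect] at hlim
  exact sub_eq_zero.mp (tendsto_nhds_unique hlim tendsto_const_nhds)

theorem integral_mul_cexp_eq_zero_of_lowerHalfPlane {h : ℂ → ℂ} {g : ℝ → ℝ}
    (hcont : ContinuousOn h {z | z.im ≤ 0}) (hdiff : DifferentiableOn ℂ h {z | z.im < 0})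
    (hhg : ∀ z : ℂ, z.im ≤ 0 → ‖h z‖ ≤ g z.re) (hg : Integrable g)
    (hg0 : Tendsto g (cocompact ℝ) (𝓝 0)) {t : ℝ} (ht : t < 0) :
    ∫ x : ℝ, h x * cexp (I * t * x) = 0 := by
  set G : ℂ → ℂ := fun z => h z * cexp (I * t * z)
  have hG_norm (z : ℂ) (hz : z.im ≤ 0) : ‖G z‖ ≤ g z.re * Real.exp (-(t * z.im)) := by
    have : ‖cexp (I * t * z)‖ = Real.exp (-(t * z.im)) := by simp [norm_exp, mul_re]
    simpa [G, this] using mul_le_mul_of_nonneg_right (hhg z hz) (Real.exp_pos _).le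
  have hG_cont : ContinuousOn G {z | z.im ≤ 0} := hcont.mul (by fun_prop)
  have hG_diff : DifferentiableOn ℂ G {z | z.im < 0} := hdiff.mul (by fun_prop)
  have hshift (y : ℝ) (hy : 0 ≤ y) : ∫ x : ℝ, G x = ∫ x : ℝ, G (x - y * I) := by
    have hstrip (z : ℂ) (hz : z.im ∈ Icc (-y) 0) : ‖G z‖ ≤ g z.re := by
      refine (hG_norm z hz.2).trans (mul_le_of_le_one_right ((norm_nonneg _).trans (hhg z hz.2)) ?_)
      exact Real.exp_le_one_iff.mpr (neg_nonpos.mpr (mul_nonneg_of_nonpos_of_nonpos ht.le hz.2))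
    have := integral_comp_add_mul_I_eq (f := G) (neg_nonpos.mpr hy)
      (hG_cont.mono fun z hz => hz.2) (hG_diff.mono fun z hz => hz.2) hstrip hg hg0
    simpa [sub_eq_add_neg] using this.symm
  have hdecay (y : ℝ) (hy : 0 ≤ y) : ‖∫ x : ℝ, G x‖ ≤ (∫ x, g x) * Real.exp (t * y) := by
    rw [hshift y hy, ← integral_mul_const]
    refine norm_integral_le_of_norm_le (hg.mul_const _) (.of_forall fun x => ?_)
    simpa using hG_norm (x - y * I) (by simpa using hy)
  have hlim : Tendsto (fun y => (∫ x, g x) * Real.exp (t * y)) atTop (𝓝 0) := by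
    simpa using (Real.tendsto_exp_atBot.comp
      ((tendsto_const_mul_atBot_of_neg ht).mpr tendsto_id)).const_mul (∫ x, g x)
  exact norm_le_zero_iff.mp <| ge_of_tendsto hlim <|
    (eventually_ge_atTop 0).mono hdecay

end Complex

theorem stmt_0 (h : ℂ → ℂ) (C : ℝ) (hC : 0 ≤ C)
    (hcont : ContinuousOn h {τ : ℂ | τ.im ≤ 0})
    (hholo : DifferentiableOn ℂ h {τ : ℂ | τ.im < 0})
    (hbound : ∀ τ : ℂ, τ.im ≤ 0 → ‖h τ‖ ≤ C * (1 + ‖τ‖) ^ (-2 : ℤ)) :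
    ∀ t : ℝ, t < 0 →
      (∫ σ : ℝ, h (σ : ℂ) * Complex.exp (Complex.I * (t : ℂ) * (σ : ℂ))) = 0 := by
  intro t ht
  refine Complex.integral_mul_cexp_eq_zero_of_lowerHalfPlane
    (g := fun x => C * (1 + ‖x‖) ^ (-2 : ℤ)) hcont hholo (fun z hz => ?_)
    ((integrable_one_add_norm_zpow (by norm_num)).const_mul C)
    (by simpa using (tendsto_one_add_norm_zpow_cocompact (n := -2) (by norm_num)).const_mul C) ht
  exact (hbound z hz).trans <| mul_le_mul_of_nonneg_left
    (one_add_zpow_neg_le_of_le (n := 2) (norm_nonneg _) (abs_re_le_norm z)) hC
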